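/- arXiv:2102.06387 — 3 statements merged into one kernel-verified Lean document; each statement's English description precedes it below -/
import Mathlib

section
/- For any r > 0, any x ∈ ℝ, and any t ≥ log 2, the squared modular clipping error satisfies (M_{[-r,r]}(x) − x)² ≤ 4r²·(exp(t·(x/r − 1)) + exp(t·(−x/r − 1))). -/
/-!
Writing `y - x = 2 r n`, the triangle inequality gives `2 r |n| ≤ |x| + r`, so `|n| ≤ z` with
`z = (|x| + r) / (2 r)`. For `t ≥ log 2` every natural number `m ≤ z` satisfies
`m ≤ 2 ^ (m - 1) ≤ exp (t (z - 1))`; squaring yields `(y - x)² ≤ 4 r² exp (t (|x| / r - 1))`, and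
`exp (t (|a| - 1))` is at most `exp (t (a - 1)) + exp (t (-a - 1))`.
-/

open Real

lemma natCast_le_exp_mul_sub_one {t z : ℝ} (ht : log 2 ≤ t) {m : ℕ} (hmz : (m : ℝ) ≤ z) :
    (m : ℝ) ≤ exp (t * (z - 1)) := by
  cases m with
  | zero => simpa using (exp_pos _).le
  | succ k =>
    have ht0 : 0 ≤ t := (log_nonneg one_le_two).trans ht
    have hk : (k : ℝ) ≤ z - 1 := by push_cast at hmz; linarith
    calc ((k + 1 : ℕ) : ℝ) ≤ 2 ^ k := by exact_mod_cast Nat.lt_two_pow_self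
      _ = exp (log 2 * k) := by rw [← rpow_natCast, rpow_def_of_pos two_pos]
      _ ≤ exp (t * (z - 1)) := exp_le_exp.mpr <| by gcongr

lemma exp_mul_abs_sub_le_add (t a c : ℝ) :
    exp (t * (|a| - c)) ≤ exp (t * (a - c)) + exp (t * (-a - c)) := by
  rcases abs_cases a with ⟨h, _⟩ | ⟨h, _⟩ <;> rw [h]
  · linarith [exp_pos (t * (-a - c))]
  · linarith [exp_pos (t * (a - c))]

lemma sq_sub_le_exp_of_mem_Icc {r x t y : ℝ} (hr : 0 < r) (ht : log 2 ≤ t)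
    (hy : y ∈ Set.Icc (-r) r) {n : ℤ} (hn : y = x + 2 * r * n) :
    (y - x) ^ 2 ≤ 4 * r ^ 2 * exp (t * (|x| / r - 1)) := by
  have hyx : |y - x| = 2 * r * n.natAbs := by
    rw [hn, add_sub_cancel_left, abs_mul, abs_of_pos (by positivity), Nat.cast_natAbs, Int.cast_abs]
  have hyx_le : |y - x| ≤ |x| + r := by
    linarith [abs_sub y x, abs_le.mpr hy]
  have hnz : (n.natAbs : ℝ) ≤ (|x| + r) / (2 * r) := by
    rw [le_div_iff₀ (by positivity)]
    linarith
  calc (y - x) ^ 2 = (2 * r) ^ 2 * (n.natAbs : ℝ) ^ 2 := by rw [← sq_abs, hyx]; ring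
    _ ≤ (2 * r) ^ 2 * exp (t * ((|x| + r) / (2 * r) - 1)) ^ 2 := by
        gcongr
        exact natCast_le_exp_mul_sub_one ht hnz
    _ = 4 * r ^ 2 * exp (t * (|x| / r - 1)) := by
        have hexponent : 2 * (t * ((|x| + r) / (2 * r) - 1)) = t * (|x| / r - 1) := by
          field_simp
          ring
        rw [← exp_nat_mul, Nat.cast_ofNat, hexponent]
        ring

/-- `y` is any valid value of the modular clipping `M_{[-r,r]}(x)`, i.e. `y ∈ [-r,r]` and
`y = x + 2r·n` for some integer `n`. -/
theorem modular_clipping_sq_error (r x t y : ℝ) (hr : 0 < r) (ht : Real.log 2 ≤ t)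
    (hy : y ∈ Set.Icc (-r) r) (hmod : ∃ n : ℤ, y = x + 2 * r * n) :
    (y - x) ^ 2 ≤ 4 * r ^ 2 * (Real.exp (t * (x / r - 1)) + Real.exp (t * (-x / r - 1))) := by
  obtain ⟨n, hn⟩ := hmod
  calc (y - x) ^ 2 ≤ 4 * r ^ 2 * exp (t * (|x / r| - 1)) := by
        rw [abs_div, abs_of_pos hr]
        exact sq_sub_le_exp_of_mem_Icc hr ht hy hn
    _ ≤ _ := by
        rw [neg_div]
        gcongr
        exact exp_mul_abs_sub_le_add t (x / r) 1
end

section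
/- Let σ ≥ 1/2 and let X₁,...,Xₙ be i.i.d. discrete Gaussians N_ℤ(0,σ²). Let Zₙ = Σᵢ Xᵢ and Wₙ ~ N_ℤ(0, nσ²). Then sup_{z∈ℤ} |log(P[Zₙ=z]/P[Wₙ=z])| ≤ 5·Σ_{k=1}^{n−1} exp(−2π²σ²·k/(k+1)) ≤ 5(n−1)·exp(−π²σ²). -/
/-!
Write `θ(u, t) = ∑ₙ exp(-2π²un²) cos(2πnt)`. Completing the square and Poisson summation show that
`N_ℤ(0, v) * N_ℤ(0, w)` is `N_ℤ(0, v + w)` reweighted by `θ(s, μ) θ(v + w, 0) / (θ(v, 0) θ(w, 0))`,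
where `s = vw/(v + w)` and `μ = vz/(v + w)`. Once `u ≥ 1/8`, each `θ(u, ·)` is within
`2.01 exp(-2π²u)` of `1`, and `θ(u, 0) ≥ 1`; for `w ≤ v` the factors `θ(v, 0)` and `θ(v + w, 0)`
are even `1 + O(exp(-4π²s))`, so the weight is `exp(±5 exp(-2π²s))`. Convolving with a nonnegative
kernel preserves such two-sided ratio bounds, and they compose additively in the exponent; adding
the `(k+1)`-st summand (`v = kσ²`, `w = σ²`, `s = σ²k/(k+1)`) costs `5 exp(-2π²σ²k/(k+1))`.
-/

/-- The discrete Gaussian probability mass function on `ℤ` with mean 0 and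
variance-parameter `v` (i.e. `N_ℤ(0, v)`). -/
noncomputable def discreteGaussianPMF (v : ℝ) (z : ℤ) : ℝ :=
  Real.exp (-(z : ℝ) ^ 2 / (2 * v)) / ∑' y : ℤ, Real.exp (-(y : ℝ) ^ 2 / (2 * v))

/-- Convolution of two mass functions on `ℤ`: the law of `X + Y` for independent `X, Y`. -/
noncomputable def convZ (f g : ℤ → ℝ) (z : ℤ) : ℝ := ∑' x : ℤ, f x * g (z - x)

/-- The law of the sum of `n` i.i.d. discrete Gaussians `N_ℤ(0, v)`. -/
noncomputable def sumDiscreteGaussianPMF (v : ℝ) : ℕ → ℤ → ℝ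
  | 0 => fun z => if z = 0 then 1 else 0
  | n + 1 => convZ (sumDiscreteGaussianPMF v n) (discreteGaussianPMF v)

open Real

/-- `(n + 1)² ≥ 3n + 1` gives the ratio `ε³`; the cruder ratio `ε` would leave no room for
the constant `5` in the final estimate. -/
lemma exp_neg_mul_succ_sq_le {c : ℝ} (hc : 0 ≤ c) (n : ℕ) :
    rexp (-c * ((n : ℝ) + 1) ^ 2) ≤ rexp (-c) * (rexp (-c) ^ 3) ^ n := by
  rw [← pow_mul, ← Real.exp_nat_mul, ← Real.exp_add]
  have hn : (n : ℝ) ≤ n ^ 2 := by exact_mod_cast Nat.le_self_pow two_ne_zero n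
  gcongr
  push_cast
  nlinarith [mul_le_mul_of_nonneg_left hn hc]

lemma norm_tsum_sub_apply_zero_le {E : Type*} [NormedAddCommGroup E] [CompleteSpace E]
    {f : ℤ → E} {c : ℝ} (hc : 0 < c) (hf : ∀ n : ℤ, ‖f n‖ ≤ rexp (-c * n ^ 2)) :
    ‖∑' n, f n - f 0‖ ≤ 2 * rexp (-c) / (1 - rexp (-c) ^ 3) := by
  set ε := rexp (-c)
  have hε3 : ε ^ 3 < 1 :=
    pow_lt_one₀ (exp_pos _).le (exp_lt_one_iff.2 (by linarith)) three_ne_zero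
  have hgeom : HasSum (fun n : ℕ => ε * (ε ^ 3) ^ n) (ε / (1 - ε ^ 3)) := by
    simpa [div_eq_mul_inv] using (hasSum_geometric_of_lt_one (by positivity) hε3).mul_left ε
  have hpos : ∀ n : ℕ, ‖f (n + 1)‖ ≤ ε * (ε ^ 3) ^ n := fun n =>
    (hf _).trans (by exact_mod_cast exp_neg_mul_succ_sq_le hc.le n)
  have hneg : ∀ n : ℕ, ‖f (-(n + 1))‖ ≤ ε * (ε ^ 3) ^ n := fun n =>
    (hf _).trans (le_of_eq_of_le (by push_cast; rw [neg_sq]) (exp_neg_mul_succ_sq_le hc.le n))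
  have hsplit : ∑' n, f n - f 0 = (∑' n : ℕ, f (n + 1)) + ∑' n : ℕ, f (-(n + 1)) := by
    rw [tsum_of_add_one_of_neg_add_one (hgeom.summable.of_norm_bounded hpos)
      (hgeom.summable.of_norm_bounded hneg)]
    abel
  rw [hsplit]
  calc _ ≤ ε / (1 - ε ^ 3) + ε / (1 - ε ^ 3) :=
        (norm_add_le _ _).trans (add_le_add (tsum_of_norm_bounded hgeom hpos)
          (tsum_of_norm_bounded hgeom hneg))
    _ = 2 * ε / (1 - ε ^ 3) := by ring

section Theta

open Complex

/-- `θ₂(t, 2πis) = ∑ₙ exp(-2π²sn²) e^{2πint}` is real for real `s` and `t`. -/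
noncomputable def gaussTheta (s t : ℝ) : ℝ := (jacobiTheta₂ t (2 * π * I * s)).re

lemma norm_jacobiTheta₂_term_ofReal (n : ℤ) (s t : ℝ) :
    ‖jacobiTheta₂_term n t (2 * π * I * s)‖ = rexp (-(2 * π ^ 2 * s) * n ^ 2) := by
  rw [norm_jacobiTheta₂_term]
  congr 1
  simp
  ring

lemma abs_gaussTheta_sub_one_le {s : ℝ} (hs : 0 < s) (t : ℝ) :
    |gaussTheta s t - 1| ≤ 2 * rexp (-(2 * π ^ 2 * s)) / (1 - rexp (-(2 * π ^ 2 * s)) ^ 3) := by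
  have h := norm_tsum_sub_apply_zero_le (by positivity)
    (fun n => (norm_jacobiTheta₂_term_ofReal n s t).le)
  have h0 : jacobiTheta₂_term 0 t (2 * π * I * s) = 1 := by simp [jacobiTheta₂_term]
  rw [h0] at h
  calc |gaussTheta s t - 1| = |(jacobiTheta₂ t (2 * π * I * s) - 1).re| := by simp [gaussTheta]
    _ ≤ _ := (abs_re_le_norm _).trans h

lemma one_le_gaussTheta_zero {s : ℝ} (hs : 0 < s) : 1 ≤ gaussTheta s 0 := by
  have hterm (n : ℤ) : jacobiTheta₂_term n (0 : ℝ) (2 * π * I * s) =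
      (rexp (-(2 * π ^ 2 * s) * n ^ 2) : ℂ) := by
    rw [jacobiTheta₂_term, ofReal_exp]
    congr 1
    push_cast
    ring_nf
    rw [I_sq]
    ring
  have hsum : Summable fun n : ℤ => rexp (-(2 * π ^ 2 * s) * n ^ 2) :=
    ((summable_jacobiTheta₂_term_iff _ _).2 (by simp; positivity)).norm.congr
      (norm_jacobiTheta₂_term_ofReal · s 0)
  rw [gaussTheta, jacobiTheta₂]
  simp only [hterm, ← ofReal_tsum, ofReal_re]
  simpa using hsum.le_tsum 0 fun n _ => (exp_pos _).le

lemma tsum_exp_neg_sq_sub_div {s : ℝ} (hs : 0 < s) (t : ℝ) :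
    ∑' x : ℤ, rexp (-(x - t) ^ 2 / (2 * s)) = √(2 * π * s) * gaussTheta s t := by
  have hpoisson := Complex.tsum_exp_neg_quadratic (a := 2 * π * s) (by simp; positivity) (I * t)
  have hlhs : ∑' n : ℤ, cexp (-π * (2 * π * s) * n ^ 2 + 2 * π * (I * t) * n) =
      jacobiTheta₂ t (2 * π * I * s) :=
    tsum_congr fun n => by
      rw [jacobiTheta₂_term]
      ring_nf
      rw [I_sq]
      ring_nf
  have hrhs : ∑' n : ℤ, cexp (-π / (2 * π * s) * (n + I * (I * t)) ^ 2) =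
      ((∑' x : ℤ, rexp (-(x - t) ^ 2 / (2 * s)) : ℝ) : ℂ) := by
    rw [ofReal_tsum]
    refine tsum_congr fun n => ?_
    rw [ofReal_exp]
    congr 1
    push_cast
    rw [← mul_assoc, I_mul_I]
    field_simp
    ring
  have hsqrt : (2 * π * s : ℂ) ^ (1 / 2 : ℂ) = (√(2 * π * s) : ℂ) := by
    rw [sqrt_eq_rpow, ofReal_cpow (by positivity)]
    push_cast
    ring_nf
  rw [hlhs, hrhs, hsqrt] at hpoisson
  have hsqrt_pos : 0 < √(2 * π * s) := by positivity
  rw [gaussTheta, hpoisson, ← ofReal_one, ← ofReal_div, re_ofReal_mul, ofReal_re]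
  field_simp

lemma summable_exp_neg_sq_sub_div {s : ℝ} (hs : 0 < s) (t : ℝ) :
    Summable fun x : ℤ => rexp (-(x - t) ^ 2 / (2 * s)) := by
  have h := ((summable_jacobiTheta₂_term_iff (((-(t / (2 * π * s)) : ℝ) : ℂ) * I)
    (((1 / (2 * π * s) : ℝ) : ℂ) * I)).2 (by simp; positivity)).norm.mul_left
    (rexp (-t ^ 2 / (2 * s)))
  refine h.congr fun n => ?_
  rw [norm_jacobiTheta₂_term, mul_I_im, mul_I_im, ofReal_re, ofReal_re, ← Real.exp_add]
  congr 1
  field_simp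
  ring

lemma gaussTheta_pos {s : ℝ} (hs : 0 < s) (t : ℝ) : 0 < gaussTheta s t := by
  have hsum : 0 < ∑' x : ℤ, rexp (-(x - t) ^ 2 / (2 * s)) :=
    (summable_exp_neg_sq_sub_div hs t).tsum_pos (fun _ => (exp_pos _).le) 0 (exp_pos _)
  rw [tsum_exp_neg_sq_sub_div hs] at hsum
  exact pos_of_mul_pos_right hsum (sqrt_nonneg _)

end Theta

lemma tsum_exp_neg_sq_div {v : ℝ} (hv : 0 < v) :
    ∑' y : ℤ, rexp (-(y : ℝ) ^ 2 / (2 * v)) = √(2 * π * v) * gaussTheta v 0 := by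
  simpa using tsum_exp_neg_sq_sub_div hv 0

lemma discreteGaussianPMF_eq {v : ℝ} (hv : 0 < v) (z : ℤ) :
    discreteGaussianPMF v z =
      rexp (-(z : ℝ) ^ 2 / (2 * v)) / (√(2 * π * v) * gaussTheta v 0) := by
  rw [discreteGaussianPMF, tsum_exp_neg_sq_div hv]

lemma discreteGaussianPMF_pos {v : ℝ} (hv : 0 < v) (z : ℤ) : 0 < discreteGaussianPMF v z := by
  have := gaussTheta_pos hv 0
  rw [discreteGaussianPMF_eq hv]
  positivity

lemma sq_div_add_sq_div_eq {v w : ℝ} (hv : 0 < v) (hw : 0 < w) (x z : ℝ) :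
    x ^ 2 / (2 * v) + (z - x) ^ 2 / (2 * w) =
      z ^ 2 / (2 * (v + w)) + (x - v * z / (v + w)) ^ 2 / (2 * (v * w / (v + w))) := by
  field_simp
  ring

lemma discreteGaussianPMF_mul_eq {v w : ℝ} (hv : 0 < v) (hw : 0 < w) (z x : ℤ) :
    discreteGaussianPMF v x * discreteGaussianPMF w (z - x) =
      rexp (-(z : ℝ) ^ 2 / (2 * (v + w))) /
          (√(2 * π * v) * gaussTheta v 0 * (√(2 * π * w) * gaussTheta w 0)) *
        rexp (-(x - v * z / (v + w)) ^ 2 / (2 * (v * w / (v + w)))) := by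
  rw [discreteGaussianPMF_eq hv, discreteGaussianPMF_eq hw, div_mul_div_comm, div_mul_eq_mul_div,
    ← Real.exp_add, ← Real.exp_add, neg_div, neg_div, neg_div, neg_div, ← neg_add,
    ← neg_add,     Int.cast_sub, sq_div_add_sq_div_eq hv hw]

lemma summable_discreteGaussianPMF_mul {v w : ℝ} (hv : 0 < v) (hw : 0 < w) (z : ℤ) :
    Summable fun x : ℤ => discreteGaussianPMF v x * discreteGaussianPMF w (z - x) := by
  simp_rw [discreteGaussianPMF_mul_eq hv hw]
  exact (summable_exp_neg_sq_sub_div (by positivity) _).mul_left _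

lemma convZ_discreteGaussianPMF {v w : ℝ} (hv : 0 < v) (hw : 0 < w) (z : ℤ) :
    convZ (discreteGaussianPMF v) (discreteGaussianPMF w) z =
      gaussTheta (v * w / (v + w)) (v * z / (v + w)) * gaussTheta (v + w) 0 /
          (gaussTheta v 0 * gaussTheta w 0) * discreteGaussianPMF (v + w) z := by
  have := gaussTheta_pos hv 0
  have := gaussTheta_pos hw 0
  have := gaussTheta_pos (add_pos hv hw) 0
  have hsqrt : √(2 * π * (v * w / (v + w))) * √(2 * π * (v + w)) =
      √(2 * π * v) * √(2 * π * w) := by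
    rw [← Real.sqrt_mul (by positivity), ← Real.sqrt_mul (by positivity)]
    congr 1
    field_simp
  have hpos : 0 < √(2 * π * v) * √(2 * π * w) := by positivity
  have hpos' : 0 < √(2 * π * (v + w)) := by positivity
  simp only [convZ, discreteGaussianPMF_mul_eq hv hw]
  rw [tsum_mul_left, tsum_exp_neg_sq_sub_div (by positivity),
    discreteGaussianPMF_eq (add_pos hv hw)]
  field_simp
  linear_combination (norm := ring_nf) gaussTheta (v * w / (v + w)) (v * z / (v + w)) * hsqrt

lemma exp_neg_two_mul_pi_sq_mul_le_one_div_ten {u : ℝ} (hu : 1 / 8 ≤ u) :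
    rexp (-(2 * π ^ 2 * u)) ≤ 1 / 10 := by
  have he : 2.7182818283 < rexp 1 := exp_one_gt_d9
  have hπ : 3.141592 < π := pi_gt_d6
  have hsplit : rexp (π ^ 2 / 4) = rexp 1 * rexp 1 * rexp (π ^ 2 / 4 - 2) := by
    rw [← Real.exp_add, ← Real.exp_add]
    ring_nf
  have hee : 7.389 ≤ rexp 1 * rexp 1 := by nlinarith
  have hrest : 1.467 ≤ rexp (π ^ 2 / 4 - 2) := by nlinarith [add_one_le_exp (π ^ 2 / 4 - 2)]
  have hten : 10 ≤ rexp (π ^ 2 / 4) :=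
    calc (10 : ℝ) ≤ 7.389 * 1.467 := by norm_num
      _ ≤ _ := hsplit ▸ mul_le_mul hee hrest (by norm_num) (by positivity)
  calc rexp (-(2 * π ^ 2 * u)) ≤ rexp (-(π ^ 2 / 4)) := by gcongr; nlinarith [pi_pos]
    _ ≤ 1 / 10 := by
      rw [Real.exp_neg, inv_le_comm₀ (exp_pos _) (by norm_num)]
      simpa using hten

lemma abs_gaussTheta_sub_one_le_of_one_div_eight_le {u : ℝ} (hu : 1 / 8 ≤ u) (t : ℝ) :
    |gaussTheta u t - 1| ≤ 2.01 * rexp (-(2 * π ^ 2 * u)) := by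
  refine (abs_gaussTheta_sub_one_le (by linarith) t).trans ?_
  set ε := rexp (-(2 * π ^ 2 * u))
  have hε : ε ≤ 1 / 10 := exp_neg_two_mul_pi_sq_mul_le_one_div_ten hu
  have hε3 : ε ^ 3 ≤ (1 / 10) ^ 3 := pow_le_pow_left₀ (exp_pos _).le hε 3
  rw [div_le_iff₀ (by linarith)]
  nlinarith [exp_pos (-(2 * π ^ 2 * u)), pow_pos (exp_pos (-(2 * π ^ 2 * u))) 3]

lemma abs_log_mul_div_mul_le {ε a b c d : ℝ} (hε₀ : 0 ≤ ε) (hε : ε ≤ 1 / 10)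
    (ha : |a - 1| ≤ 2.01 * ε) (hb₁ : 1 ≤ b) (hb : b ≤ 1 + 0.21 * ε)
    (hc₁ : 1 ≤ c) (hc : c ≤ 1 + 0.21 * ε) (hd₁ : 1 ≤ d) (hd : d ≤ 1 + 2.01 * ε) :
    |log (a * b / (c * d))| ≤ 5 * ε := by
  obtain ⟨ha₁, ha₂⟩ := abs_le.mp ha
  have ha₀ : 0 < a := by linarith
  have hinv : a⁻¹ ≤ 1 + 2.6 * ε := by
    rw [inv_le_iff_one_le_mul₀ ha₀]
    nlinarith
  have hloga := one_sub_inv_le_log_of_pos ha₀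
  rw [log_div (by positivity) (by positivity), log_mul ha₀.ne' (by positivity),
    log_mul (by positivity) (by positivity), abs_le]
  constructor <;> linarith [log_le_sub_one_of_pos ha₀,
    log_le_sub_one_of_pos (by positivity : 0 < b), log_le_sub_one_of_pos (by positivity : 0 < c),
    log_le_sub_one_of_pos (by positivity : 0 < d), log_nonneg hb₁, log_nonneg hc₁, log_nonneg hd₁]

lemma abs_log_gaussTheta_ratio_le {v w : ℝ} (hw : 1 / 4 ≤ w) (hwv : w ≤ v) (x : ℝ) :
    |log (gaussTheta (v * w / (v + w)) x * gaussTheta (v + w) 0 /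
        (gaussTheta v 0 * gaussTheta w 0))| ≤ 5 * rexp (-(2 * π ^ 2 * (v * w / (v + w)))) := by
  have hv : 0 < v := by linarith
  have hvw : 0 < v + w := by linarith
  set s := v * w / (v + w) with hs_def
  set ε := rexp (-(2 * π ^ 2 * s))
  have hs : 1 / 8 ≤ s := by rw [hs_def, le_div_iff₀ hvw]; nlinarith
  have hε : ε ≤ 1 / 10 := exp_neg_two_mul_pi_sq_mul_le_one_div_ten hs
  have hε₀ : 0 ≤ ε := (exp_pos _).le
  have hθ_far {u : ℝ} (hu : 2 * s ≤ u) : gaussTheta u 0 ≤ 1 + 0.21 * ε := by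
    have h₁ := (abs_le.mp
      (abs_gaussTheta_sub_one_le_of_one_div_eight_le (u := u) (t := 0) (by linarith))).2
    have h₂ : rexp (-(2 * π ^ 2 * u)) ≤ ε ^ 2 := by
      rw [← Real.exp_nat_mul]
      gcongr
      push_cast
      nlinarith [pi_pos]
    nlinarith
  have hws : s ≤ w := by rw [hs_def, div_le_iff₀ hvw]; nlinarith
  have hθw : gaussTheta w 0 ≤ 1 + 2.01 * ε := by
    have h₁ := (abs_le.mp
      (abs_gaussTheta_sub_one_le_of_one_div_eight_le (t := 0) (hs.trans hws))).2
    have h₂ : rexp (-(2 * π ^ 2 * w)) ≤ ε := exp_le_exp.2 (by nlinarith [pi_pos])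
    linarith
  refine abs_log_mul_div_mul_le hε₀ hε (abs_gaussTheta_sub_one_le_of_one_div_eight_le hs x)
    (one_le_gaussTheta_zero hvw) (hθ_far ?_) (one_le_gaussTheta_zero hv) (hθ_far ?_)
    (one_le_gaussTheta_zero (by linarith)) hθw
  · rw [hs_def, ← mul_div_assoc, div_le_iff₀ hvw]; nlinarith [sq_nonneg (v - w)]
  · rw [hs_def, ← mul_div_assoc, div_le_iff₀ hvw]; nlinarith

/-- `D_{±∞}(P ‖ Q) ≤ A`, stated multiplicatively so that no division by `Q` is needed. -/
def MaxDivergenceLE {α : Type*} (P Q : α → ℝ) (A : ℝ) : Prop :=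
  ∀ a, rexp (-A) * Q a ≤ P a ∧ P a ≤ rexp A * Q a

namespace MaxDivergenceLE

variable {α : Type*} {P Q R : α → ℝ} {A B : ℝ}

lemma refl (P : α → ℝ) : MaxDivergenceLE P P 0 := fun a => by simp

lemma trans (hPQ : MaxDivergenceLE P Q A) (hQR : MaxDivergenceLE Q R B) :
    MaxDivergenceLE P R (A + B) := fun a => by
  obtain ⟨hPQ₁, hPQ₂⟩ := hPQ a
  obtain ⟨hQR₁, hQR₂⟩ := hQR a
  constructor
  · calc rexp (-(A + B)) * R a = rexp (-A) * (rexp (-B) * R a) := by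
          rw [neg_add, Real.exp_add, mul_assoc]
      _ ≤ rexp (-A) * Q a := by gcongr
      _ ≤ P a := hPQ₁
  · calc P a ≤ rexp A * Q a := hPQ₂
      _ ≤ rexp A * (rexp B * R a) := by gcongr
      _ = rexp (A + B) * R a := by rw [Real.exp_add, mul_assoc]

lemma of_eq_mul {K : α → ℝ} (hP : ∀ a, P a = K a * Q a) (hK : ∀ a, 0 < K a)
    (hlogK : ∀ a, |log (K a)| ≤ A) (hQ : ∀ a, 0 ≤ Q a) :
    MaxDivergenceLE P Q A := fun a => by
  obtain ⟨hlow, hup⟩ := abs_le.mp (hlogK a)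
  rw [hP]
  constructor
  · exact mul_le_mul_of_nonneg_right ((le_log_iff_exp_le (hK a)).mp hlow) (hQ a)
  · exact mul_le_mul_of_nonneg_right ((log_le_iff_le_exp (hK a)).mp hup) (hQ a)

lemma abs_log_div_le (h : MaxDivergenceLE P Q A) {a : α} (hQ : 0 < Q a) :
    |log (P a / Q a)| ≤ A := by
  obtain ⟨hlow, hup⟩ := h a
  have hP : 0 < P a := (mul_pos (exp_pos _) hQ).trans_le hlow
  rw [log_div hP.ne' hQ.ne', abs_le]
  constructor
  · have := log_le_log (mul_pos (exp_pos _) hQ) hlow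
    rw [log_mul (exp_pos _).ne' hQ.ne', log_exp] at this
    linarith
  · have := log_le_log hP hup
    rw [log_mul (exp_pos _).ne' hQ.ne', log_exp] at this
    linarith

lemma convZ {P Q g : ℤ → ℝ} (h : MaxDivergenceLE P Q A) (hQ : ∀ x, 0 ≤ Q x)
    (hg : ∀ x, 0 ≤ g x) (hQg : ∀ z, Summable fun x => Q x * g (z - x)) :
    MaxDivergenceLE (convZ P g) (convZ Q g) A := fun z => by
  have hlow x : rexp (-A) * (Q x * g (z - x)) ≤ P x * g (z - x) := by
    rw [← mul_assoc]; exact mul_le_mul_of_nonneg_right (h x).1 (hg _)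
  have hup x : P x * g (z - x) ≤ rexp A * (Q x * g (z - x)) := by
    rw [← mul_assoc]; exact mul_le_mul_of_nonneg_right (h x).2 (hg _)
  have hPg : Summable fun x => P x * g (z - x) :=
    ((hQg z).mul_left _).of_nonneg_of_le (fun x => (mul_nonneg (by positivity) (mul_nonneg (hQ x)
      (hg _))).trans (hlow x)) hup
  simp only [_root_.convZ, ← tsum_mul_left]
  exact ⟨((hQg z).mul_left _).tsum_le_tsum hlow hPg, hPg.tsum_le_tsum hup ((hQg z).mul_left _)⟩

end MaxDivergenceLE

lemma maxDivergenceLE_convZ_discreteGaussianPMF {v w : ℝ} (hw : 1 / 4 ≤ w) (hwv : w ≤ v) :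
    MaxDivergenceLE (convZ (discreteGaussianPMF v) (discreteGaussianPMF w))
      (discreteGaussianPMF (v + w)) (5 * rexp (-(2 * π ^ 2 * (v * w / (v + w))))) := by
  have hw₀ : 0 < w := by linarith
  have hv₀ : 0 < v := by linarith
  refine .of_eq_mul (convZ_discreteGaussianPMF hv₀ hw₀) (fun z => ?_)
    (fun z => abs_log_gaussTheta_ratio_le hw hwv _)
    (fun z => (discreteGaussianPMF_pos (by linarith) z).le)
  have := gaussTheta_pos (by positivity : 0 < v * w / (v + w)) (v * z / (v + w))
  have := gaussTheta_pos (add_pos hv₀ hw₀) 0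
  have := gaussTheta_pos hv₀ 0
  have := gaussTheta_pos hw₀ 0
  positivity

lemma maxDivergenceLE_sumDiscreteGaussianPMF {v : ℝ} (hv : 1 / 4 ≤ v) (n : ℕ) :
    MaxDivergenceLE (sumDiscreteGaussianPMF v (n + 1)) (discreteGaussianPMF ((n + 1 : ℕ) * v))
      (5 * ∑ k ∈ Finset.Icc 1 n, rexp (-2 * π ^ 2 * v * k / (k + 1))) := by
  induction n with
  | zero =>
    have hone : sumDiscreteGaussianPMF v 1 = discreteGaussianPMF v := by
      ext z
      simp [sumDiscreteGaussianPMF, convZ, tsum_ite_eq]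
    simpa [hone] using MaxDivergenceLE.refl (discreteGaussianPMF v)
  | succ n ih =>
    have hv₀ : 0 < v := by linarith
    have hstep := maxDivergenceLE_convZ_discreteGaussianPMF (v := (n + 1 : ℕ) * v) hv
      (le_mul_of_one_le_left hv₀.le (by simp))
    have hconv := ih.convZ (fun x => (discreteGaussianPMF_pos (by positivity) x).le)
      (fun x => (discreteGaussianPMF_pos hv₀ x).le)
      (summable_discreteGaussianPMF_mul (by positivity) hv₀)
    have hvar : ((n + 1 + 1 : ℕ) : ℝ) * v = (n + 1 : ℕ) * v + v := by push_cast; ring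
    have hA : 5 * ∑ k ∈ Finset.Icc 1 (n + 1), rexp (-2 * π ^ 2 * v * k / (k + 1)) =
        5 * ∑ k ∈ Finset.Icc 1 n, rexp (-2 * π ^ 2 * v * k / (k + 1)) +
          5 * rexp (-(2 * π ^ 2 * ((n + 1 : ℕ) * v * v / ((n + 1 : ℕ) * v + v)))) := by
      rw [Finset.sum_Icc_succ_top (by omega), mul_add]
      congr 3
      field_simp
    rw [hvar, hA]
    exact hconv.trans hstep

lemma sum_exp_neg_two_pi_sq_mul_div_succ_le {v : ℝ} (hv : 0 ≤ v) (m : ℕ) :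
    ∑ k ∈ Finset.Icc 1 m, rexp (-2 * π ^ 2 * v * k / (k + 1)) ≤ m * rexp (-π ^ 2 * v) := by
  have hterm : ∀ k ∈ Finset.Icc 1 m,
      rexp (-2 * π ^ 2 * v * k / (k + 1)) ≤ rexp (-π ^ 2 * v) := by
    intro k hk
    have hk : (1 : ℝ) ≤ k := by exact_mod_cast (Finset.mem_Icc.mp hk).1
    gcongr
    rw [div_le_iff₀ (by positivity)]
    nlinarith [mul_nonneg (by positivity : 0 ≤ π ^ 2 * v) (sub_nonneg.mpr hk)]
  simpa using Finset.sum_le_card_nsmul _ _ _ hterm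

/-- Convolution of many discrete Gaussians: if `Zₙ` is the sum of `n` i.i.d. `N_ℤ(0,σ²)`
and `Wₙ ~ N_ℤ(0, nσ²)`, then for every `z ∈ ℤ`,
`|log(P[Zₙ=z]/P[Wₙ=z])| ≤ 5·Σ_{k=1}^{n−1} exp(−2π²σ²·k/(k+1)) ≤ 5(n−1)·exp(−π²σ²)`. -/
theorem convolution_many_discrete_gaussians_close (σ : ℝ) (hσ : 1 / 2 ≤ σ) (n : ℕ)
    (hn : 1 ≤ n) (z : ℤ) :
    |Real.log (sumDiscreteGaussianPMF (σ ^ 2) n z / discreteGaussianPMF ((n : ℝ) * σ ^ 2) z)| ≤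
        5 * ∑ k ∈ Finset.Icc 1 (n - 1),
          Real.exp (-2 * Real.pi ^ 2 * σ ^ 2 * (k : ℝ) / ((k : ℝ) + 1)) ∧
      5 * ∑ k ∈ Finset.Icc 1 (n - 1),
          Real.exp (-2 * Real.pi ^ 2 * σ ^ 2 * (k : ℝ) / ((k : ℝ) + 1)) ≤
        5 * ((n : ℝ) - 1) * Real.exp (-Real.pi ^ 2 * σ ^ 2) := by
  obtain ⟨m, rfl⟩ : ∃ m, n = m + 1 := ⟨n - 1, by omega⟩
  have hv : 1 / 4 ≤ σ ^ 2 := by nlinarith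
  rw [Nat.add_sub_cancel]
  refine ⟨(maxDivergenceLE_sumDiscreteGaussianPMF hv m).abs_log_div_le
    (discreteGaussianPMF_pos (by positivity) z), ?_⟩
  have := sum_exp_neg_two_pi_sq_mul_div_succ_le (sq_nonneg σ) m
  push_cast
  linarith
end

section
/- Let γ > 0, x ∈ ℝ^d, and β ∈ (0,1). For randomized rounding R_γ(x), P[‖R_γ(x)‖₁ ≤ ‖x‖₁ + γ·√((d/2)·log(1/β))] ≥ 1 − β. -/
/-!
A grid cell `[γk, γk + γ]` never straddles `0`, so `|·|` is linear on it and
`|R_i| - |x_i| = ±(R_i - x_i)`. By unbiasedness these increments are centred; they are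
independent and take values in an interval of length `γ`, so by Hoeffding's lemma each is
sub-Gaussian with variance proxy `(γ/2)²`. Hoeffding's inequality then bounds the probability
that their sum exceeds `T = γ √((d/2) log(1/β))` by `exp (-2T² / (dγ²)) = β`.
-/

open MeasureTheory ProbabilityTheory Set
open scoped NNReal

lemma mul_intCast_nonneg_or_add_nonpos {γ : ℝ} (hγ : 0 ≤ γ) (k : ℤ) :
    0 ≤ γ * k ∨ γ * k + γ ≤ 0 := by
  rcases le_or_gt 0 k with hk | hk
  · exact Or.inl (mul_nonneg hγ (by exact_mod_cast hk))
  · have hk' : (k : ℝ) + 1 ≤ 0 := by exact_mod_cast Int.add_one_le_iff.mpr hk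
    right
    nlinarith

lemma mul_floor_div_le {γ : ℝ} (hγ : 0 < γ) (x : ℝ) : γ * ⌊x / γ⌋ ≤ x :=
  calc γ * ⌊x / γ⌋ ≤ γ * (x / γ) := by gcongr; exact Int.floor_le _
    _ = x := mul_div_cancel₀ x hγ.ne'

lemma lt_mul_floor_div_add {γ : ℝ} (hγ : 0 < γ) (x : ℝ) : x < γ * ⌊x / γ⌋ + γ :=
  calc x = γ * (x / γ) := (mul_div_cancel₀ x hγ.ne').symm
    _ < γ * (⌊x / γ⌋ + 1) := by gcongr; exact Int.lt_floor_add_one _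
    _ = γ * ⌊x / γ⌋ + γ := by ring

lemma abs_eq_mul_of_mem_Icc {a b r : ℝ} (hab : 0 ≤ a ∨ b ≤ 0) (hr : r ∈ Icc a b) :
    |r| = (if 0 ≤ a then 1 else -1) * r := by
  split_ifs with ha
  · rw [one_mul, abs_of_nonneg (ha.trans hr.1)]
  · rw [neg_one_mul, abs_of_nonpos (hr.2.trans (hab.resolve_left ha))]

section

variable {Ω : Type*} [MeasurableSpace Ω] {μ : Measure Ω}

lemma integral_eq_add_measureReal_mul_of_ae_eq_or_eq [IsProbabilityMeasure μ] {Z : Ω → ℝ}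
    {a b : ℝ} (hZ : Measurable Z) (h : ∀ᵐ ω ∂μ, Z ω = a ∨ Z ω = b) :
    μ[Z] = a + μ.real {ω | Z ω = b} * (b - a) := by
  have hb : MeasurableSet {ω | Z ω = b} := hZ (measurableSet_singleton b)
  have hZ' : Z =ᵐ[μ] fun ω => a + {ω | Z ω = b}.indicator (fun _ => b - a) ω := by
    filter_upwards [h] with ω hω
    by_cases hωb : Z ω = b
    · simp [hωb]
    · rw [indicator_of_notMem (show ω ∉ {ω | Z ω = b} from hωb), add_zero]
      exact hω.resolve_right hωb
  rw [integral_congr_ae hZ', integral_add (integrable_const a)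
    ((integrable_const _).indicator hb), integral_const, integral_indicator_const _ hb]
  simp

lemma hasSubgaussianMGF_abs_sub_abs_integral [IsProbabilityMeasure μ] {Z : Ω → ℝ} {a b : ℝ}
    (hZ : AEMeasurable Z μ) (hab : 0 ≤ a ∨ b ≤ 0) (hZab : ∀ᵐ ω ∂μ, Z ω ∈ Icc a b)
    (hmean : μ[Z] ∈ Icc a b) :
    HasSubgaussianMGF (fun ω => |Z ω| - |μ[Z]|) ((‖b - a‖₊ / 2) ^ 2) μ := by
  set s : ℝ := if 0 ≤ a then 1 else -1 with hs_def
  have hs : s ^ 2 = 1 := by split_ifs at hs_def <;> simp [hs_def]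
  have h : HasSubgaussianMGF (fun ω => s * (Z ω - μ[Z])) ((‖b - a‖₊ / 2) ^ 2) μ := by
    convert (hasSubgaussianMGF_of_mem_Icc hZ hZab).const_mul s using 1
    ext
    change _ = s ^ 2 * _
    rw [hs, one_mul]
    rfl
  refine h.congr ?_
  filter_upwards [hZab] with ω hω
  rw [abs_eq_mul_of_mem_Icc hab hω, abs_eq_mul_of_mem_Icc hab hmean, mul_sub]

lemma hasSubgaussianMGF_abs_sub_abs_of_unbiased_rounding [IsProbabilityMeasure μ] {γ x : ℝ}
    (hγ : 0 < γ) {Z : Ω → ℝ} (hZ : Measurable Z)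
    (hval : ∀ᵐ ω ∂μ, Z ω = γ * ⌊x / γ⌋ ∨ Z ω = γ * ⌊x / γ⌋ + γ)
    (hprob : μ {ω | Z ω = γ * ⌊x / γ⌋ + γ} = ENNReal.ofReal ((x - γ * ⌊x / γ⌋) / γ)) :
    HasSubgaussianMGF (fun ω => |Z ω| - |x|) ((‖γ‖₊ / 2) ^ 2) μ := by
  have hx : x ∈ Icc (γ * ⌊x / γ⌋) (γ * ⌊x / γ⌋ + γ) :=
    ⟨mul_floor_div_le hγ x, (lt_mul_floor_div_add hγ x).le⟩
  have hmean : μ[Z] = x := by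
    rw [integral_eq_add_measureReal_mul_of_ae_eq_or_eq hZ hval, measureReal_def, hprob,
      ENNReal.toReal_ofReal (div_nonneg (sub_nonneg.mpr hx.1) hγ.le)]
    field_simp
    ring
  have hZ_mem : ∀ᵐ ω ∂μ, Z ω ∈ Icc (γ * ⌊x / γ⌋) (γ * ⌊x / γ⌋ + γ) := by
    filter_upwards [hval] with ω hω
    rcases hω with h | h <;> simp [h, hγ.le]
  have h := hasSubgaussianMGF_abs_sub_abs_integral hZ.aemeasurable
    (mul_intCast_nonneg_or_add_nonpos hγ.le _) hZ_mem (hmean ▸ hx)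
  rwa [hmean, add_sub_cancel_left] at h

lemma ofReal_one_sub_le_measure_of_measureReal_compl_le [IsProbabilityMeasure μ] {s : Set Ω}
    {β : ℝ} (h : μ.real sᶜ ≤ β) : ENNReal.ofReal (1 - β) ≤ μ s := by
  rw [ENNReal.ofReal_le_iff_le_toReal (measure_ne_top μ s)]
  have := measureReal_union_le (μ := μ) s sᶜ
  rw [union_compl_self, probReal_univ] at this
  change _ ≤ μ.real s
  linarith

lemma ofReal_one_sub_le_measure_sum_le_sqrt {ι : Type*} {Y : ι → Ω → ℝ}
    (hindep : iIndepFun Y μ) {c : ι → ℝ≥0} {s : Finset ι}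
    (hY : ∀ i ∈ s, HasSubgaussianMGF (Y i) (c i) μ) {β : ℝ} (hβ : β ∈ Ioo 0 1) :
    ENNReal.ofReal (1 - β) ≤
      μ {ω | ∑ i ∈ s, Y i ω ≤ √(2 * (∑ i ∈ s, c i) * Real.log (1 / β))} := by
  have := hindep.isProbabilityMeasure
  have hS := HasSubgaussianMGF.sum_of_iIndepFun hindep hY
  set C := ∑ i ∈ s, c i
  set ε := √(2 * C * Real.log (1 / β))
  apply ofReal_one_sub_le_measure_of_measureReal_compl_le
  rcases eq_zero_or_pos C with hC | hC
  -- Here the Chernoff bound degenerates (`x / 0 = 0`), but the sum vanishes almost surely.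
  · rw [hC] at hS
    have hnull : μ {ω | ∑ i ∈ s, Y i ω ≤ ε}ᶜ = 0 := by
      rw [measure_eq_zero_iff_ae_notMem]
      have hε : 0 ≤ ε := Real.sqrt_nonneg _
      filter_upwards [hS.ae_eq_zero_of_hasSubgaussianMGF_zero] with ω hω
      simpa [hω] using hε
    simp [Measure.real, hnull, hβ.1.le]
  · have hlog : 0 < Real.log (1 / β) := Real.log_pos (one_lt_one_div hβ.1 hβ.2)
    calc μ.real {ω | ∑ i ∈ s, Y i ω ≤ ε}ᶜ ≤ μ.real {ω | ε ≤ ∑ i ∈ s, Y i ω} :=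
          measureReal_mono fun _ (hω : ¬_ ≤ ε) => le_of_not_ge hω
      _ ≤ Real.exp (-ε ^ 2 / (2 * C)) := hS.measure_ge_le (Real.sqrt_nonneg _)
      _ = β := by
          rw [Real.sq_sqrt (by positivity), neg_div, mul_div_cancel_left₀ _ (by positivity),
            one_div, Real.log_inv, neg_neg, Real.exp_log hβ.1]

end

/-- High-probability bound on the ℓ₁ norm of randomized rounding:
`P[‖R(x)‖₁ ≤ ‖x‖₁ + γ·√((d/2)·log(1/β))] ≥ 1 − β`. -/
theorem randomized_rounding_l1_high_prob
    {Ω : Type*} [MeasurableSpace Ω] (μ : Measure Ω) [IsProbabilityMeasure μ]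
    (d : ℕ) (γ : ℝ) (hγ : 0 < γ) (β : ℝ) (hβ : β ∈ Set.Ioo (0 : ℝ) 1)
    (x : Fin d → ℝ) (R : Ω → Fin d → ℝ)
    (hmeas : ∀ i, Measurable fun ω => R ω i)
    (hval : ∀ i, ∀ᵐ ω ∂μ,
      R ω i = γ * ⌊x i / γ⌋ ∨ R ω i = γ * ⌊x i / γ⌋ + γ)
    (hprob : ∀ i, μ {ω | R ω i = γ * ⌊x i / γ⌋ + γ} =
      ENNReal.ofReal ((x i - γ * ⌊x i / γ⌋) / γ))
    (hindep : iIndepFun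
      (fun i ω => R ω i) μ) :
    ENNReal.ofReal (1 - β) ≤
      μ {ω | ∑ i, |R ω i| ≤
        ∑ i, |x i| + γ * Real.sqrt ((d : ℝ) / 2 * Real.log (1 / β))} := by
  have h := ofReal_one_sub_le_measure_sum_le_sqrt
    (hindep.comp (fun i r => |r| - |x i|) fun i => by fun_prop)
    (fun i (_ : i ∈ Finset.univ) =>
      hasSubgaussianMGF_abs_sub_abs_of_unbiased_rounding hγ (hmeas i) (hval i) (hprob i)) hβ
  have hε : √(2 * ((∑ _i : Fin d, (‖γ‖₊ / 2) ^ 2 : ℝ≥0) : ℝ) * Real.log (1 / β)) =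
      γ * √((d : ℝ) / 2 * Real.log (1 / β)) := by
    have hvar : 2 * ((∑ _i : Fin d, (‖γ‖₊ / 2) ^ 2 : ℝ≥0) : ℝ) * Real.log (1 / β) =
        γ ^ 2 * ((d : ℝ) / 2 * Real.log (1 / β)) := by
      push_cast
      simp only [Finset.sum_const, Finset.card_univ, Fintype.card_fin, nsmul_eq_mul,
        Real.norm_eq_abs, abs_of_pos hγ]
      ring
    rw [hvar, Real.sqrt_mul (sq_nonneg γ), Real.sqrt_sq hγ.le]
  rw [hε] at h
  simpa only [Function.comp_apply, Finset.sum_sub_distrib, sub_le_iff_le_add'] using h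
end
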